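/- The function h* is hypergrid submodular: for every x ∈ D, every coordinate i with x_i < n, and every coordinate j, one has ∂_j h*(x) ≥ ∂_j h*(x + e_i) whenever both marginals are defined (i.e., h*(x + e_j) − h*(x) ≥ h*(x + e_i + e_j) − h*(x + e_i) whenever all four points lie in D). -/
import Mathlib

/-- Suffix function `ℓ_t(x) = Σ_{s=t}^r (x_s − (n/2 − g)) − gr/4`. -/
def ellF (n g r : ℕ) (x : ℕ → ℤ) (t : ℕ) : ℤ :=
  (∑ s ∈ Finset.Icc t r, (x s - ((n : ℤ) / 2 - (g : ℤ)))) - ((g : ℤ) * (r : ℤ)) / 4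

/-- The function `h(x) = Σ_i x_i − max(0, max_{odd t} ℓ_t(x)) − max(0, max_{even t} ℓ_t(x))`. -/
def hF (n g r : ℕ) (x : ℕ → ℤ) : ℤ :=
  (∑ j ∈ Finset.Icc 1 r, x j)
    - ((Finset.Icc 1 r).filter (fun t => Odd t)).fold max 0 (ellF n g r x)
    - ((Finset.Icc 1 r).filter (fun t => Even t)).fold max 0 (ellF n g r x)

/-- Membership in the hypergrid `D = {0,…,n}^r` (coordinates `1,…,r`). -/
def inD (n r : ℕ) (x : ℕ → ℤ) : Prop :=
  ∀ j ∈ Finset.Icc 1 r, 0 ≤ x j ∧ x j ≤ (n : ℤ)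

/-- The `i`-th standard unit vector. -/
def eVec (i : ℕ) : ℕ → ℤ := fun j => if j = i then 1 else 0

/-- Truncation `x̄ = (x_1,…,x_{r−1}, min(x_r, n/2 − g/4))`. -/
def truncF (n g r : ℕ) (x : ℕ → ℤ) : ℕ → ℤ :=
  fun j => if j = r then min (x r) ((n : ℤ) / 2 - (g : ℤ) / 4) else x j

/-- The function `h*`. -/
def hStarF (n g r : ℕ) (x : ℕ → ℤ) : ℤ :=
  if x r ≤ (n : ℤ) / 2 - (g : ℤ) / 4 then hF n g r x
  else hF n g r (truncF n g r x) - (x r - ((n : ℤ) / 2 - (g : ℤ) / 4))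

/-- `x` is `i`-balanced: `x_i − g/8 ≤ x_j ≤ x_i + g/8` for all `i < j ≤ r`
(stated multiplied through by `8`). -/
def iBal (g r i : ℕ) (x : ℕ → ℤ) : Prop :=
  ∀ j : ℕ, i < j → j ≤ r → 8 * (x i - x j) ≤ (g : ℤ) ∧ 8 * (x j - x i) ≤ (g : ℤ)

/- ### Auxiliary lemmas -/

lemma add_eVec_apply_ne (x : ℕ → ℤ) (i k : ℕ) (h : k ≠ i) : (x + eVec i) k = x k := by
  simp only [Pi.add_apply, eVec, if_neg h, add_zero]

lemma add_eVec_apply_self (x : ℕ → ℤ) (i : ℕ) : (x + eVec i) i = x i + 1 := by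
  show x i + (if i = i then (1:ℤ) else 0) = x i + 1
  rw [if_pos rfl]

lemma fold_max_cases (s : Finset ℕ) (f : ℕ → ℤ) :
    s.fold max 0 f = 0 ∨ ∃ a ∈ s, s.fold max 0 f = f a := by
  induction s using Finset.induction with
  | empty => left; rfl
  | @insert a s' h ih =>
    rw [Finset.fold_insert h]
    rcases ih with h0 | ⟨b, hb, hbe⟩
    · rw [h0]
      rcases le_total (f a) 0 with h1 | h1
      · left; exact max_eq_right h1
      · right; exact ⟨a, Finset.mem_insert_self _ _, max_eq_left h1⟩
    · rcases le_total (f a) (s'.fold max 0 f) with h1 | h1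
      · right; exact ⟨b, Finset.mem_insert_of_mem hb, by rw [max_eq_right h1, hbe]⟩
      · right; exact ⟨a, Finset.mem_insert_self _ _, max_eq_left h1⟩

lemma fold_max_nonneg (s : Finset ℕ) (f : ℕ → ℤ) : (0:ℤ) ≤ s.fold max 0 f :=
  (Finset.le_fold_max _).mpr (Or.inl le_rfl)

lemma le_fold_max_of_mem (s : Finset ℕ) (f : ℕ → ℤ) (a : ℕ) (ha : a ∈ s) :
    f a ≤ s.fold max 0 f :=
  (Finset.le_fold_max _).mpr (Or.inr ⟨a, ha, le_rfl⟩)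

lemma ellF_add (n g r : ℕ) (x : ℕ → ℤ) (i t : ℕ) (hi : i ≤ r) :
    ellF n g r (x + eVec i) t = ellF n g r x t + (if t ≤ i then 1 else 0) := by
  unfold ellF
  have h1 : ∑ s ∈ Finset.Icc t r, ((x + eVec i) s - ((n : ℤ) / 2 - (g : ℤ)))
      = (∑ s ∈ Finset.Icc t r, (x s - ((n : ℤ) / 2 - (g : ℤ))))
        + ∑ s ∈ Finset.Icc t r, (if s = i then (1:ℤ) else 0) := by
    rw [← Finset.sum_add_distrib]
    refine Finset.sum_congr rfl fun s _ => ?_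
    simp only [Pi.add_apply, eVec]; ring
  rw [h1, Finset.sum_ite_eq' (Finset.Icc t r) i (fun _ => (1:ℤ))]
  have h2 : (i ∈ Finset.Icc t r) ↔ t ≤ i := by
    rw [Finset.mem_Icc]; exact ⟨fun h => h.1, fun h => ⟨h, hi⟩⟩
  by_cases h : t ≤ i
  · rw [if_pos (h2.mpr h), if_pos h]; ring
  · rw [if_neg (fun hm => h (h2.mp hm)), if_neg h]; ring

lemma sum_add_eVec (r : ℕ) (x : ℕ → ℤ) (i : ℕ) (hi : i ∈ Finset.Icc 1 r) :
    ∑ k ∈ Finset.Icc 1 r, (x + eVec i) k = (∑ k ∈ Finset.Icc 1 r, x k) + 1 := by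
  have h1 : ∑ k ∈ Finset.Icc 1 r, (x + eVec i) k
      = (∑ k ∈ Finset.Icc 1 r, x k) + ∑ k ∈ Finset.Icc 1 r, (if k = i then (1:ℤ) else 0) := by
    rw [← Finset.sum_add_distrib]
    exact Finset.sum_congr rfl fun k _ => rfl
  rw [h1, Finset.sum_ite_eq' (Finset.Icc 1 r) i (fun _ => (1:ℤ)), if_pos hi]

/-- Supermodularity of the max of suffix-linear functions (chain of gradients). -/
lemma fold_supermod (n g r : ℕ) (T : Finset ℕ) (x : ℕ → ℤ) (i j : ℕ)
    (hir : i ≤ r) (hjr : j ≤ r) (hij : i ≤ j) :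
    T.fold max 0 (ellF n g r (x + eVec i)) + T.fold max 0 (ellF n g r (x + eVec j))
      ≤ T.fold max 0 (ellF n g r (x + eVec i + eVec j)) + T.fold max 0 (ellF n g r x) := by
  have hx0 := fold_max_nonneg T (ellF n g r x)
  have hij0 := fold_max_nonneg T (ellF n g r (x + eVec i + eVec j))
  rcases fold_max_cases T (ellF n g r (x + eVec i)) with hA | ⟨a, haT, haE⟩
  · rcases fold_max_cases T (ellF n g r (x + eVec j)) with hB | ⟨b, hbT, hbE⟩
    · rw [hA, hB]; linarith
    · have h1 : ellF n g r (x + eVec i + eVec j) b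
          = ellF n g r (x + eVec j) b + (if b ≤ i then 1 else 0) := by
        rw [add_right_comm]; exact ellF_add n g r _ i b hir
      have h2 := le_fold_max_of_mem T (ellF n g r (x + eVec i + eVec j)) b hbT
      rw [hA, hbE]
      split_ifs at h1 <;> linarith
  · rcases fold_max_cases T (ellF n g r (x + eVec j)) with hB | ⟨b, hbT, hbE⟩
    · have h1 : ellF n g r (x + eVec i + eVec j) a
          = ellF n g r (x + eVec i) a + (if a ≤ j then 1 else 0) :=
        ellF_add n g r _ j a hjr
      have h2 := le_fold_max_of_mem T (ellF n g r (x + eVec i + eVec j)) a haT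
      rw [haE, hB]
      split_ifs at h1 <;> linarith
    · by_cases haj : a ≤ j
      · have h1 : ellF n g r (x + eVec i + eVec j) a
            = ellF n g r (x + eVec i) a + 1 := by
          rw [ellF_add n g r _ j a hjr, if_pos haj]
        have h2 := le_fold_max_of_mem T (ellF n g r (x + eVec i + eVec j)) a haT
        have h3 : ellF n g r (x + eVec j) b = ellF n g r x b + (if b ≤ j then 1 else 0) :=
          ellF_add n g r x j b hjr
        have h4 := le_fold_max_of_mem T (ellF n g r x) b hbT
        rw [haE, hbE]
        split_ifs at h3 <;> linarith
      · have hai : ¬ a ≤ i := fun h => haj (h.trans hij)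
        have h1 : ellF n g r (x + eVec i) a = ellF n g r x a := by
          rw [ellF_add n g r x i a hir, if_neg hai, add_zero]
        have h2 := le_fold_max_of_mem T (ellF n g r x) a haT
        have h3 : ellF n g r (x + eVec i + eVec j) b
            = ellF n g r (x + eVec j) b + (if b ≤ i then 1 else 0) := by
          rw [add_right_comm]; exact ellF_add n g r _ i b hir
        have h4 := le_fold_max_of_mem T (ellF n g r (x + eVec i + eVec j)) b hbT
        rw [haE, hbE]
        split_ifs at h3 <;> linarith

/-- `hF` is submodular (ordered version). -/
lemma hF_submod_aux (n g r : ℕ) (x : ℕ → ℤ) (i j : ℕ)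
    (hi : i ∈ Finset.Icc 1 r) (hj : j ∈ Finset.Icc 1 r) (hij : i ≤ j) :
    hF n g r (x + eVec i + eVec j) + hF n g r x
      ≤ hF n g r (x + eVec i) + hF n g r (x + eVec j) := by
  obtain ⟨hi1, hir⟩ := Finset.mem_Icc.mp hi
  obtain ⟨hj1, hjr⟩ := Finset.mem_Icc.mp hj
  have hOdd := fold_supermod n g r ((Finset.Icc 1 r).filter (fun t => Odd t)) x i j hir hjr hij
  have hEven := fold_supermod n g r ((Finset.Icc 1 r).filter (fun t => Even t)) x i j hir hjr hij
  have hs1 := sum_add_eVec r x i hi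
  have hs2 := sum_add_eVec r x j hj
  have hs3 := sum_add_eVec r (x + eVec i) j hj
  unfold hF
  rw [hs1, hs2, hs3]
  linarith

/-- `hF` is submodular. -/
lemma hF_submod (n g r : ℕ) (x : ℕ → ℤ) (i j : ℕ)
    (hi : i ∈ Finset.Icc 1 r) (hj : j ∈ Finset.Icc 1 r) :
    hF n g r (x + eVec i + eVec j) + hF n g r x
      ≤ hF n g r (x + eVec i) + hF n g r (x + eVec j) := by
  rcases le_total i j with h | h
  · exact hF_submod_aux n g r x i j hi hj h
  · have := hF_submod_aux n g r x j i hj hi h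
    rw [add_right_comm] at this
    linarith

/-- `∂_r hF ≥ -1`. -/
lemma hF_marg_r (n g r : ℕ) (hr : 1 ≤ r) (x : ℕ → ℤ) :
    hF n g r x ≤ hF n g r (x + eVec r) + 1 := by
  have key : ∀ T : Finset ℕ, (∀ t ∈ T, t ≤ r) →
      T.fold max 0 (ellF n g r (x + eVec r)) ≤ T.fold max 0 (ellF n g r x) + 1 := by
    intro T hT
    refine (Finset.fold_max_le _).mpr ⟨by linarith [fold_max_nonneg T (ellF n g r x)], ?_⟩
    intro t ht
    rw [ellF_add n g r x r t le_rfl, if_pos (hT t ht)]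
    have := le_fold_max_of_mem T (ellF n g r x) t ht
    linarith
  have hO := key ((Finset.Icc 1 r).filter (fun t => Odd t))
    (fun t ht => (Finset.mem_Icc.mp (Finset.mem_filter.mp ht).1).2)
  have hE := key ((Finset.Icc 1 r).filter (fun t => Even t))
    (fun t ht => (Finset.mem_Icc.mp (Finset.mem_filter.mp ht).1).2)
  have hs := sum_add_eVec r x r (Finset.mem_Icc.mpr ⟨hr, le_rfl⟩)
  unfold hF
  rw [hs]
  linarith

/-- Uniform formula for `hStarF`. -/
lemma hStarF_eq (n g r : ℕ) (x : ℕ → ℤ) :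
    hStarF n g r x
      = hF n g r (truncF n g r x) - max (x r - ((n:ℤ)/2 - (g:ℤ)/4)) 0 := by
  unfold hStarF
  split_ifs with h
  · have ht : truncF n g r x = x := by
      funext k; unfold truncF
      split_ifs with hk
      · subst hk; exact min_eq_left h
      · rfl
    rw [ht, max_eq_right (by linarith), sub_zero]
  · push_neg at h
    rw [max_eq_left (by linarith)]

lemma trunc_add_ne (n g r : ℕ) (x : ℕ → ℤ) (i : ℕ) (hi : i ≠ r) :
    truncF n g r (x + eVec i) = truncF n g r x + eVec i := by
  funext k
  simp only [truncF, Pi.add_apply, eVec]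
  split_ifs <;> omega

lemma trunc_add_r_lt (n g r : ℕ) (x : ℕ → ℤ) (h : x r < (n:ℤ)/2 - (g:ℤ)/4) :
    truncF n g r (x + eVec r) = truncF n g r x + eVec r := by
  funext k
  simp only [truncF, Pi.add_apply, eVec]
  split_ifs <;> omega

lemma trunc_add_r_ge (n g r : ℕ) (x : ℕ → ℤ) (h : (n:ℤ)/2 - (g:ℤ)/4 ≤ x r) :
    truncF n g r (x + eVec r) = truncF n g r x := by
  funext k
  simp only [truncF, Pi.add_apply, eVec]
  split_ifs <;> omega

/-- `h*` is hypergrid submodular: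
`h*(x+e_j) − h*(x) ≥ h*(x+e_i+e_j) − h*(x+e_i)` whenever all four points lie in `D`. -/
theorem hStarF_hypergrid_submodular
    (n g r : ℕ) (hn : 0 < n) (hn2 : 2 ∣ n) (hg : 0 < g) (hg4 : 4 ∣ g)
    (hr : 3 ≤ r) (hrodd : Odd r) :
    ∀ x : ℕ → ℤ, ∀ i ∈ Finset.Icc 1 r, ∀ j ∈ Finset.Icc 1 r,
      (∀ k ∈ Finset.Icc 1 r,
          0 ≤ x k ∧
          x k + (if k = i then 1 else 0) + (if k = j then 1 else 0) ≤ (n : ℤ)) →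
      hStarF n g r (x + eVec j) - hStarF n g r x ≥
        hStarF n g r (x + eVec i + eVec j) - hStarF n g r (x + eVec i) := by
  intro x i hi j hj _hbox
  obtain ⟨hi1, hir⟩ := Finset.mem_Icc.mp hi
  obtain ⟨hj1, hjr⟩ := Finset.mem_Icc.mp hj
  have hr1 : (1:ℕ) ≤ r := by omega
  have hrmem : r ∈ Finset.Icc 1 r := Finset.mem_Icc.mpr ⟨hr1, le_rfl⟩
  simp only [hStarF_eq]
  by_cases hiR : i = r
  · by_cases hjR : j = r
    · -- i = j = r
      rw [hiR, hjR]
      have e1 : (x + eVec r) r = x r + 1 := add_eVec_apply_self x r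
      have e2 : (x + eVec r + eVec r) r = x r + 2 := by
        rw [add_eVec_apply_self (x + eVec r) r, e1]; ring
      rw [e1, e2]
      by_cases h1 : x r + 1 < (n:ℤ)/2 - (g:ℤ)/4
      · have t1 : truncF n g r (x + eVec r) = truncF n g r x + eVec r :=
          trunc_add_r_lt n g r x (by linarith)
        have t2 : truncF n g r (x + eVec r + eVec r) = truncF n g r x + eVec r + eVec r := by
          rw [trunc_add_r_lt n g r (x + eVec r) (by rw [e1]; linarith), t1]
        rw [t1, t2]
        have m0 : max (x r - ((n:ℤ)/2 - (g:ℤ)/4)) 0 = 0 := max_eq_right (by linarith)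
        have m1 : max (x r + 1 - ((n:ℤ)/2 - (g:ℤ)/4)) 0 = 0 := max_eq_right (by linarith)
        have m2 : max (x r + 2 - ((n:ℤ)/2 - (g:ℤ)/4)) 0 = 0 := max_eq_right (by linarith)
        rw [m0, m1, m2]
        linarith [hF_submod n g r (truncF n g r x) r r hrmem hrmem]
      · by_cases h2 : x r < (n:ℤ)/2 - (g:ℤ)/4
        · -- x r + 1 = c
          have hc : (n:ℤ)/2 - (g:ℤ)/4 = x r + 1 := by omega
          have t1 : truncF n g r (x + eVec r) = truncF n g r x + eVec r :=
            trunc_add_r_lt n g r x h2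
          have t2 : truncF n g r (x + eVec r + eVec r) = truncF n g r x + eVec r := by
            rw [trunc_add_r_ge n g r (x + eVec r) (by rw [e1]; omega), t1]
          rw [t1, t2]
          have m0 : max (x r - ((n:ℤ)/2 - (g:ℤ)/4)) 0 = 0 := max_eq_right (by omega)
          have m1 : max (x r + 1 - ((n:ℤ)/2 - (g:ℤ)/4)) 0 = 0 := max_eq_right (by omega)
          have m2 : max (x r + 2 - ((n:ℤ)/2 - (g:ℤ)/4)) 0 = 1 := by omega
          rw [m0, m1, m2]
          linarith [hF_marg_r n g r hr1 (truncF n g r x)]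
        · -- c ≤ x r
          push_neg at h2
          have t1 : truncF n g r (x + eVec r) = truncF n g r x :=
            trunc_add_r_ge n g r x h2
          have t2 : truncF n g r (x + eVec r + eVec r) = truncF n g r x := by
            rw [trunc_add_r_ge n g r (x + eVec r) (by rw [e1]; omega), t1]
          rw [t1, t2]
          have m0 : max (x r - ((n:ℤ)/2 - (g:ℤ)/4)) 0 = x r - ((n:ℤ)/2 - (g:ℤ)/4) :=
            max_eq_left (by omega)
          have m1 : max (x r + 1 - ((n:ℤ)/2 - (g:ℤ)/4)) 0 = x r + 1 - ((n:ℤ)/2 - (g:ℤ)/4) :=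
            max_eq_left (by omega)
          have m2 : max (x r + 2 - ((n:ℤ)/2 - (g:ℤ)/4)) 0 = x r + 2 - ((n:ℤ)/2 - (g:ℤ)/4) :=
            max_eq_left (by omega)
          rw [m0, m1, m2]
          ring_nf
          linarith
    · -- i = r, j ≠ r
      rw [hiR]
      have hrj : r ≠ j := fun h => hjR h.symm
      have e1 : (x + eVec j) r = x r := add_eVec_apply_ne x j r hrj
      have e2 : (x + eVec r) r = x r + 1 := add_eVec_apply_self x r
      have e3 : (x + eVec r + eVec j) r = x r + 1 := by
        rw [add_eVec_apply_ne (x + eVec r) j r hrj, e2]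
      rw [e1, e2, e3]
      have tj : truncF n g r (x + eVec j) = truncF n g r x + eVec j :=
        trunc_add_ne n g r x j hjR
      by_cases h2 : x r < (n:ℤ)/2 - (g:ℤ)/4
      · have t1 : truncF n g r (x + eVec r) = truncF n g r x + eVec r :=
          trunc_add_r_lt n g r x h2
        have t2 : truncF n g r (x + eVec r + eVec j) = truncF n g r x + eVec r + eVec j := by
          rw [trunc_add_ne n g r (x + eVec r) j hjR, t1]
        rw [tj, t1, t2]
        have m0 : max (x r - ((n:ℤ)/2 - (g:ℤ)/4)) 0 = 0 := max_eq_right (by omega)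
        have m1 : max (x r + 1 - ((n:ℤ)/2 - (g:ℤ)/4)) 0 = 0 := max_eq_right (by omega)
        rw [m0, m1]
        linarith [hF_submod n g r (truncF n g r x) r j hrmem hj]
      · push_neg at h2
        have t1 : truncF n g r (x + eVec r) = truncF n g r x :=
          trunc_add_r_ge n g r x h2
        have t2 : truncF n g r (x + eVec r + eVec j) = truncF n g r x + eVec j := by
          rw [add_right_comm, trunc_add_r_ge n g r (x + eVec j) (by rw [e1]; omega), tj]
        rw [tj, t1, t2]
        linarith
  · by_cases hjR : j = r
    · -- i ≠ r, j = r
      rw [hjR]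
      have hri : r ≠ i := fun h => hiR h.symm
      have e1 : (x + eVec r) r = x r + 1 := add_eVec_apply_self x r
      have e2 : (x + eVec i) r = x r := add_eVec_apply_ne x i r hri
      have e3 : (x + eVec i + eVec r) r = x r + 1 := by
        rw [add_eVec_apply_self (x + eVec i) r, e2]
      rw [e1, e2, e3]
      have ti : truncF n g r (x + eVec i) = truncF n g r x + eVec i :=
        trunc_add_ne n g r x i hiR
      by_cases h2 : x r < (n:ℤ)/2 - (g:ℤ)/4
      · have t1 : truncF n g r (x + eVec r) = truncF n g r x + eVec r :=
          trunc_add_r_lt n g r x h2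
        have t2 : truncF n g r (x + eVec i + eVec r) = truncF n g r x + eVec i + eVec r := by
          rw [trunc_add_r_lt n g r (x + eVec i) (by rw [e2]; omega), ti]
        rw [ti, t1, t2]
        have m0 : max (x r - ((n:ℤ)/2 - (g:ℤ)/4)) 0 = 0 := max_eq_right (by omega)
        have m1 : max (x r + 1 - ((n:ℤ)/2 - (g:ℤ)/4)) 0 = 0 := max_eq_right (by omega)
        rw [m0, m1]
        linarith [hF_submod n g r (truncF n g r x) i r hi hrmem]
      · push_neg at h2
        have t1 : truncF n g r (x + eVec r) = truncF n g r x :=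
          trunc_add_r_ge n g r x h2
        have t2 : truncF n g r (x + eVec i + eVec r) = truncF n g r x + eVec i := by
          rw [trunc_add_r_ge n g r (x + eVec i) (by rw [e2]; omega), ti]
        rw [ti, t1, t2]
        linarith
    · -- i ≠ r, j ≠ r
      have hri : r ≠ i := fun h => hiR h.symm
      have hrj : r ≠ j := fun h => hjR h.symm
      have e1 : (x + eVec j) r = x r := add_eVec_apply_ne x j r hrj
      have e2 : (x + eVec i) r = x r := add_eVec_apply_ne x i r hri
      have e3 : (x + eVec i + eVec j) r = x r := by
        rw [add_eVec_apply_ne (x + eVec i) j r hrj, e2]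
      rw [e1, e2, e3]
      have ti : truncF n g r (x + eVec i) = truncF n g r x + eVec i :=
        trunc_add_ne n g r x i hiR
      have tj : truncF n g r (x + eVec j) = truncF n g r x + eVec j :=
        trunc_add_ne n g r x j hjR
      have tij : truncF n g r (x + eVec i + eVec j) = truncF n g r x + eVec i + eVec j := by
        rw [trunc_add_ne n g r (x + eVec i) j hjR, ti]
      rw [ti, tj, tij]
      linarith [hF_submod n g r (truncF n g r x) i j hi hj]
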